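/- arXiv:1301.6921 — 3 statements merged into one kernel-verified Lean document; each statement's English description precedes it below -/
import Mathlib

section
/- Let C = C₁ ⊔ C₂ and let B be a conjunction of literals with domain exactly C₁ and target values b : C₁ → {0,1}. Suppose every variable in C₂ has a positive monotonic effect on D relative to C (D is nondecreasing in each coordinate of C₂). If there is ω* ∈ Ω such that (i) D at the assignment equal to b on C₁ and 0 on C₂ equals 1 for ω*, and (ii) for every i ∈ C₁, D at the assignment equal to b on C₁ ∖ {i}, equal to 1 − b(i) at i, and 0 on C₂, equals 0 for ω*, then B is a minimal sufficient cause for D relative to C for ω*. -/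
/-- An assignment of values to the binary causes indexed by `ι`. -/
abbrev Assign (ι : Type*) := ι → Bool

/-- A conjunction of literals over `ι`: a partial assignment, where `B i = some v`
means the literal at coordinate `i` has target value `v`, and `B i = none` means
`i` is not in the domain of the conjunction. -/
abbrev Conj (ι : Type*) := ι → Option Bool

/-- An assignment `c` satisfies a conjunction of literals `B`. -/
def Satisfies {ι : Type*} (c : Assign ι) (B : Conj ι) : Prop :=
  ∀ i v, B i = some v → c i = v

/-- `B'` extends `B` : the domain of `B'` contains that of `B` and they agree there. -/
def ConjExtends {ι : Type*} (B B' : Conj ι) : Prop :=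
  ∀ i v, B i = some v → B' i = some v

/-- `(A, 𝔅)` is a sufficient cause representation for the family of potential
outcomes `D`. -/
def IsRepresentation {ι Ω : Type*} (D : Ω → Assign ι → Bool)
    {p : ℕ} (A : Fin p → Ω → Bool) (𝔅 : Fin p → Conj ι) : Prop :=
  ∀ (ω : Ω) (c : Assign ι),
    D ω c = true ↔ ∃ j, A j ω = true ∧ Satisfies c (𝔅 j)

/-- `B` is irreducible for `D(C, Ω)`: every sufficient cause representation
contains some conjunction extending `B`. -/
def IrreducibleConj {ι Ω : Type*} (D : Ω → Assign ι → Bool) (B : Conj ι) : Prop :=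
  ∀ (p : ℕ) (A : Fin p → Ω → Bool) (𝔅 : Fin p → Conj ι),
    IsRepresentation D A 𝔅 → ∃ j, ConjExtends B (𝔅 j)

/-- `B` is a sufficient cause for `D` for the individual `ω`. -/
def SuffCauseFor {ι Ω : Type*} (D : Ω → Assign ι → Bool) (B : Conj ι) (ω : Ω) : Prop :=
  ∀ c : Assign ι, Satisfies c B → D ω c = true

/-- `B` is a minimal sufficient cause for `D` for `ω`: it is a sufficient cause,
but no restriction of `B` to a proper subset of its domain is. -/
def MinSuffCauseFor {ι Ω : Type*} (D : Ω → Assign ι → Bool) (B : Conj ι) (ω : Ω) : Prop :=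
  SuffCauseFor D B ω ∧
    ∀ B' : Conj ι, ConjExtends B' B → B' ≠ B → ¬ SuffCauseFor D B' ω

/-- `B` is a singular (minimal sufficient) cause for `ω`: it is the unique minimal
sufficient cause for `ω`. -/
def SingularFor {ι Ω : Type*} (D : Ω → Assign ι → Bool) (B : Conj ι) (ω : Ω) : Prop :=
  MinSuffCauseFor D B ω ∧ ∀ B' : Conj ι, B' ≠ B → ¬ MinSuffCauseFor D B' ω

/-- `B` is singular for `D(C, Ω)`: it is singular for some individual. -/
def Singular {ι Ω : Type*} (D : Ω → Assign ι → Bool) (B : Conj ι) : Prop :=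
  ∃ ω : Ω, SingularFor D B ω

/-- The literal at coordinate `i` with target value `v` has a positive monotonic
effect on `D` relative to `C`. -/
def PosMonotone {ι Ω : Type*} [DecidableEq ι] (D : Ω → Assign ι → Bool)
    (i : ι) (v : Bool) : Prop :=
  ∀ (ω : Ω) (c : Assign ι),
    D ω (Function.update c i (!v)) = true → D ω (Function.update c i v) = true

/-- `T` is a tree on the finite vertex set `V`: a set of unordered pairs of
distinct elements of `V` with `|T| = |V| - 1` such that any two vertices of `V`
are connected by a path of edges of `T`. -/
def IsTreeOn {ι : Type*} (V : Finset ι) (T : Finset (Sym2 ι)) : Prop :=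
  (∀ e ∈ T, ¬ e.IsDiag ∧ ∀ i ∈ e, i ∈ V) ∧
  T.card = V.card - 1 ∧
  (∀ x ∈ V, ∀ y ∈ V, Relation.ReflTransGen (fun a b => s(a, b) ∈ T) x y)

/-!
Sufficiency: an assignment satisfying `B` lies above the base assignment (`b` on `C₁`, `0` on
`C₂`) and differs from it only on `C₂`, where `D` is nondecreasing, so raising those coordinates
one at a time keeps `D = 1`. Minimality: a proper restriction of `B` drops some `i ∈ C₁`, and then
the base assignment with coordinate `i` flipped satisfies the restriction but has `D = 0`.
-/

section

variable {ι Ω : Type*}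

lemma ConjExtends.exists_eq_none_of_ne {B B' : Conj ι} (hext : ConjExtends B' B) (hne : B' ≠ B) :
    ∃ i, B' i = none ∧ B i ≠ none := by
  by_contra! h
  refine hne (funext fun i => ?_)
  cases hi : B' i with
  | none => exact (h i hi).symm
  | some v => exact (hext i v hi).symm

variable [DecidableEq ι]

lemma Satisfies.update_of_eq_none {c : Assign ι} {B B' : Conj ι}
    (hc : Satisfies c B) (hext : ConjExtends B' B) {i : ι} (hi : B' i = none) (v : Bool) :
    Satisfies (Function.update c i v) B' := by
  intro j w hj
  have hji : j ≠ i := by rintro rfl; simp [hi] at hj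
  rw [Function.update_of_ne hji]
  exact hc j w (hext j w hj)

lemma satisfies_ite_iff (c : Assign ι) (s : Finset ι) (b : ι → Bool) :
    Satisfies c (fun i => if i ∈ s then some (b i) else none) ↔ ∀ i ∈ s, c i = b i := by
  simp [Satisfies]

variable {D : Ω → Assign ι → Bool} {ω : Ω}

lemma PosMonotone.apply_update_true {i : ι} (hD : PosMonotone D i true) {c : Assign ι}
    (hc : D ω c = true) : D ω (Function.update c i true) = true := by
  cases hci : c i with
  | true => rwa [Function.update_eq_self_iff.mpr hci.symm]
  | false => exact hD ω c (by rwa [Bool.not_true, Function.update_eq_self_iff.mpr hci.symm])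

lemma eq_true_of_le_of_posMonotone {s : Finset ι} (hs : ∀ i ∈ s, PosMonotone D i true)
    {c c' : Assign ι} (hle : c ≤ c') (hout : ∀ i ∉ s, c i = c' i) (hc : D ω c = true) :
    D ω c' = true := by
  induction s using Finset.induction_on generalizing c with
  | empty => exact funext (fun i => hout i (Finset.notMem_empty i)) ▸ hc
  | @insert a s _ ih =>
    have hstep : D ω (Function.update c a (c' a)) = true := by
      cases hca' : c' a with
      | true => exact (hs a (Finset.mem_insert_self a s)).apply_update_true hc
      | false =>
        rwa [Function.update_eq_self_iff.mpr (Bool.eq_false_of_le_false (hca' ▸ hle a)).symm]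
    refine ih (fun i hi => hs i (Finset.mem_insert_of_mem hi)) ?_ ?_ hstep
    · intro i
      rcases eq_or_ne i a with rfl | hia
      · simp
      · simpa [Function.update_of_ne hia] using hle i
    · intro i hi
      rcases eq_or_ne i a with rfl | hia
      · simp
      · rw [Function.update_of_ne hia]
        exact hout i (by simp [hia, hi])

end

theorem minSuffCause_of_monotone_general {ι Ω : Type*} [Fintype ι] [DecidableEq ι]
    (D : Ω → Assign ι → Bool) (C₁ C₂ : Finset ι)
    (hunion : C₁ ∪ C₂ = Finset.univ)
    (b : ι → Bool)
    (hmono : ∀ i ∈ C₂, PosMonotone D i true)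
    (ω : Ω)
    (h1 : D ω (fun i => if i ∈ C₁ then b i else false) = true)
    (h2 : ∀ i ∈ C₁,
      D ω (fun j => if j = i then !(b j) else if j ∈ C₁ then b j else false) = false) :
    MinSuffCauseFor D (fun i => if i ∈ C₁ then some (b i) else none) ω := by
  set base : Assign ι := fun i => if i ∈ C₁ then b i else false
  have hbase : Satisfies base (fun i => if i ∈ C₁ then some (b i) else none) :=
    (satisfies_ite_iff _ _ _).mpr fun i hi => if_pos hi
  refine ⟨fun c hc => ?_, fun B' hext hne hsuff => ?_⟩
  · rw [satisfies_ite_iff] at hc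
    refine eq_true_of_le_of_posMonotone hmono (fun i => ?_) (fun i hi => ?_) h1
    · by_cases hi : i ∈ C₁ <;> simp [base, hi, hc]
    · have hi₁ : i ∈ C₁ := by simpa [hi] using hunion.ge (Finset.mem_univ i)
      simp [base, hi₁, hc i hi₁]
  · obtain ⟨i, hi', hi⟩ := hext.exists_eq_none_of_ne hne
    have hiC₁ : i ∈ C₁ := by by_contra h; simp [h] at hi
    have hflip : Function.update base i (!b i)
        = fun j => if j = i then !(b j) else if j ∈ C₁ then b j else false := by
      funext j
      by_cases hji : j = i <;> simp [base, hji]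
    have := hsuff _ (hbase.update_of_eq_none hext hi' (!b i))
    rw [hflip, h2 i hiC₁] at this
    exact Bool.false_ne_true this

/-- Proposition 4.4: test for a minimal sufficient cause under
positive monotonicity of the variables in `C₂`. -/
theorem minSuffCause_of_monotone {ι Ω : Type*} [Fintype ι] [DecidableEq ι]
    [Nonempty ι] [Nonempty Ω]
    (D : Ω → Assign ι → Bool) (C₁ C₂ : Finset ι)
    (hdisj : Disjoint C₁ C₂) (hunion : C₁ ∪ C₂ = Finset.univ)
    (b : ι → Bool)
    (hmono : ∀ i ∈ C₂, PosMonotone D i true)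
    (ω : Ω)
    (h1 : D ω (fun i => if i ∈ C₁ then b i else false) = true)
    (h2 : ∀ i ∈ C₁,
      D ω (fun j => if j = i then !(b j) else if j ∈ C₁ then b j else false) = false) :
    MinSuffCauseFor D (fun i => if i ∈ C₁ then some (b i) else none) ω :=
  minSuffCause_of_monotone_general D C₁ C₂ hunion b hmono ω h1 h2
end

section
/- Let B be a conjunction of literals over C. Then B is singular for D(C,Ω) if and only if there exists ω* ∈ Ω such that in every sufficient cause representation (A, 𝔅) for D(C;Ω): (i) for every conjunction of literals B* with domain all of C (|B*| = |C|) extending B, there exists a pair (A_i, B_i) in the representation with B* extending B_i and A_i(ω*) = 1; and (ii) for every pair (A_i, B_i) in the representation such that B_i does not extend B, A_i(ω*) = 0. -/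
/-! `B` is singular for `ω` exactly when `D ω c = true ↔ Satisfies c B`: when `D ω c = true`, the
full conjunction of `c` is a sufficient cause, so contains a minimal one, which must be `B`; conversely a conjunction all of
whose satisfying assignments satisfy `B` extends `B`. The conditions on representations say the
same about `ω`: a term active at `ω` has a conjunction that forces `B`, hence extends it, and the
representation with one term per full assignment pins `D ω` down to the indicator of `B`. -/

section

variable {ι Ω : Type*}

namespace ConjExtends

variable {B B' B'' : Conj ι}

theorem refl (B : Conj ι) : ConjExtends B B := fun _ _ h => h

theorem trans (h : ConjExtends B B') (h' : ConjExtends B' B'') : ConjExtends B B'' :=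
  fun i v hv => h' i v (h i v hv)

theorem antisymm (h : ConjExtends B B') (h' : ConjExtends B' B) : B = B' := by
  funext i
  cases hB : B i with
  | some v => exact (h i v hB).symm
  | none =>
    cases hB' : B' i with
    | none => rfl
    | some v => simpa [hB] using h' i v hB'

end ConjExtends

theorem satisfies_some_iff {c c' : Assign ι} : Satisfies c (fun i => some (c' i)) ↔ c' = c := by
  refine ⟨fun h => funext fun i => (h i (c' i) rfl).symm, ?_⟩
  rintro rfl i v hv
  exact Option.some_injective _ hv

theorem conjExtends_some_iff_satisfies {B : Conj ι} {c : Assign ι} :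
    ConjExtends B (fun i => some (c i)) ↔ Satisfies c B :=
  ⟨fun h i v hv => Option.some_injective _ (h i v hv), fun h i v hv => congrArg some (h i v hv)⟩

theorem satisfies_getD (B : Conj ι) (d : Bool) : Satisfies (fun i => (B i).getD d) B :=
  fun i v hv => by simp [hv]

theorem conjExtends_of_forall_satisfies {B B' : Conj ι}
    (h : ∀ c, Satisfies c B' → Satisfies c B) : ConjExtends B B' := by
  intro i v hv
  -- where `B'` leaves `i` free or fixes it to `!v`, this assignment violates `B` at `i`
  have hc := h _ (satisfies_getD B' (!v)) i v hv
  cases hB' : B' i with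
  | none => simp [hB'] at hc
  | some w => simp only [hB', Option.getD_some] at hc; rw [hc]

def conjDomain [Fintype ι] (B : Conj ι) : Finset ι := {i | (B i).isSome}

theorem ConjExtends.conjDomain_ssubset [Fintype ι] {B B' : Conj ι} (h : ConjExtends B' B)
    (hne : B' ≠ B) : conjDomain B' ⊂ conjDomain B := by
  refine ⟨fun i hi => ?_, fun hsub => hne (h.antisymm fun i v hv => ?_)⟩
  · simp only [conjDomain, Finset.mem_filter, Finset.mem_univ, true_and,
      Option.isSome_iff_exists] at hi ⊢
    obtain ⟨v, hv⟩ := hi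
    exact ⟨v, h i v hv⟩
  · have hi : i ∈ conjDomain B' := hsub (by simp [conjDomain, hv])
    simp only [conjDomain, Finset.mem_filter, Finset.mem_univ, true_and,
      Option.isSome_iff_exists] at hi
    obtain ⟨w, hw⟩ := hi
    rwa [← Option.some_injective _ ((h i w hw).symm.trans hv)]

variable {D : Ω → Assign ι → Bool} {B : Conj ι} {ω : Ω}

theorem SuffCauseFor.exists_minSuffCauseFor [Fintype ι] {S : Conj ι} (hS : SuffCauseFor D S ω) :
    ∃ B, ConjExtends B S ∧ MinSuffCauseFor D B ω := by
  obtain ⟨B, ⟨hBS, hB⟩, hmin⟩ :=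
    Set.exists_min_image {B | ConjExtends B S ∧ SuffCauseFor D B ω} (fun B => (conjDomain B).card)
      (Set.toFinite _) ⟨S, .refl S, hS⟩
  refine ⟨B, hBS, hB, fun B' hB'B hne hB' => ?_⟩
  exact (Finset.card_lt_card (hB'B.conjDomain_ssubset hne)).not_ge
    (hmin B' ⟨hB'B.trans hBS, hB'⟩)

theorem singularFor_iff_forall_satisfies [Fintype ι] :
    SingularFor D B ω ↔ ∀ c, D ω c = true ↔ Satisfies c B := by
  constructor
  · rintro ⟨⟨hB, -⟩, huniq⟩ c
    refine ⟨fun hc => ?_, hB c⟩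
    have hfull : SuffCauseFor D (fun i => some (c i)) ω := fun c' hc' =>
      satisfies_some_iff.mp hc' ▸ hc
    obtain ⟨B', hB'c, hB'⟩ := hfull.exists_minSuffCauseFor
    obtain rfl : B' = B := by_contra fun hne => huniq B' hne hB'
    exact conjExtends_some_iff_satisfies.mp hB'c
  · intro hD
    have hB : SuffCauseFor D B ω := fun c hc => (hD c).mpr hc
    have extends_of_suff (B' : Conj ι) (hB' : SuffCauseFor D B' ω) : ConjExtends B B' :=
      conjExtends_of_forall_satisfies fun c hc => (hD c).mp (hB' c hc)
    exact ⟨⟨hB, fun B' hB'B hne hB' => hne (hB'B.antisymm (extends_of_suff B' hB'))⟩,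
      fun B' hne hB' => hB'.2 B (extends_of_suff B' hB'.1) (Ne.symm hne) hB⟩

theorem IsRepresentation.conjExtends_of_active {p : ℕ} {A : Fin p → Ω → Bool}
    {𝔅 : Fin p → Conj ι} (hrep : IsRepresentation D A 𝔅)
    (hD : ∀ c, D ω c = true → Satisfies c B) {j : Fin p} (hj : A j ω = true) :
    ConjExtends B (𝔅 j) :=
  conjExtends_of_forall_satisfies fun c hc => hD c ((hrep ω c).mpr ⟨j, hj, hc⟩)

theorem isRepresentation_of_equiv (D : Ω → Assign ι → Bool) {p : ℕ} (e : Assign ι ≃ Fin p) :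
    IsRepresentation D (fun j ω => D ω (e.symm j)) (fun j i => some (e.symm j i)) := by
  intro ω c
  simp only [satisfies_some_iff]
  exact ⟨fun h => ⟨e c, by simpa using h, by simp⟩, by rintro ⟨j, hj, rfl⟩; exact hj⟩

theorem forall_isRepresentation_iff [Fintype ι] :
    (∀ (p : ℕ) (A : Fin p → Ω → Bool) (𝔅 : Fin p → Conj ι),
        IsRepresentation D A 𝔅 →
          (∀ b' : ι → Bool, ConjExtends B (fun i => some (b' i)) →
            ∃ j, ConjExtends (𝔅 j) (fun i => some (b' i)) ∧ A j ω = true) ∧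
          (∀ j, ¬ ConjExtends B (𝔅 j) → A j ω = false)) ↔
      ∀ c, D ω c = true ↔ Satisfies c B := by
  constructor
  · intro h c
    classical
    let e := Fintype.equivFin (Assign ι)
    obtain ⟨hcover, hinactive⟩ := h _ _ _ (isRepresentation_of_equiv D e)
    refine ⟨fun hc => by_contra fun hnot => ?_, fun hc => ?_⟩
    · have := hinactive (e c) (by simpa [conjExtends_some_iff_satisfies] using hnot)
      simp_all
    · obtain ⟨j, hj, hA⟩ := hcover c (conjExtends_some_iff_satisfies.mpr hc)
      rw [conjExtends_some_iff_satisfies, satisfies_some_iff] at hj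
      simpa [hj] using hA
  · intro hD p A 𝔅 hrep
    refine ⟨fun c hc => ?_, fun j hj => Bool.eq_false_iff.mpr fun hA =>
      hj (hrep.conjExtends_of_active (fun c => (hD c).mp) hA)⟩
    obtain ⟨j, hA, hcj⟩ := (hrep ω c).mp ((hD c).mpr (conjExtends_some_iff_satisfies.mp hc))
    exact ⟨j, conjExtends_some_iff_satisfies.mpr hcj, hA⟩

end

theorem singular_iff_representation_general {ι Ω : Type*} [Fintype ι]
    (D : Ω → Assign ι → Bool) (B : Conj ι) :
    Singular D B ↔
      ∃ ω : Ω, ∀ (p : ℕ) (A : Fin p → Ω → Bool) (𝔅 : Fin p → Conj ι),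
        IsRepresentation D A 𝔅 →
          (∀ b' : ι → Bool, ConjExtends B (fun i => some (b' i)) →
            ∃ j, ConjExtends (𝔅 j) (fun i => some (b' i)) ∧ A j ω = true) ∧
          (∀ j, ¬ ConjExtends B (𝔅 j) → A j ω = false) :=
  exists_congr fun _ => singularFor_iff_forall_satisfies.trans forall_isRepresentation_iff.symm

/-- Theorem 5.2: characterization of singularity in terms of
sufficient cause representations. -/
theorem singular_iff_representation {ι Ω : Type*} [Fintype ι] [Nonempty ι] [Nonempty Ω]
    (D : Ω → Assign ι → Bool) (B : Conj ι) :
    Singular D B ↔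
      ∃ ω : Ω, ∀ (p : ℕ) (A : Fin p → Ω → Bool) (𝔅 : Fin p → Conj ι),
        IsRepresentation D A 𝔅 →
          (∀ b' : ι → Bool, ConjExtends B (fun i => some (b' i)) →
            ∃ j, ConjExtends (𝔅 j) (fun i => some (b' i)) ∧ A j ω = true) ∧
          (∀ j, ¬ ConjExtends B (𝔅 j) → A j ω = false) :=
  singular_iff_representation_general D B
end

section
/- Let B be a conjunction of literals with domain all of C (|B| = |C|) and target values b : C → {0,1}, with C partitioned as B₊ ⊔ B′, and suppose every literal of B at a coordinate in B₊ has a positive monotonic effect on D relative to C. If for some tree 𝔗 on B₊ and some ω* ∈ Ω one has D_{B=1}(ω*) − Σ_{i ∈ B₊} D_{B∖{i}=1, i flipped}(ω*) − Σ_{∅ ≠ B̃ ⊆ B′} D_{B∖B̃=1, B̃ flipped}(ω*) + Σ_{E ∈ 𝔗} D_{B∖E=1, E flipped}(ω*) > 0, where D_{B=1} denotes D at the target assignment b, and 'flipped' coordinates are set to 1 − b(·) with all other coordinates at their target values, then B is singular for D(C,Ω). -/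
/-!
Write `x_i`, `y_s`, `z_E` for the outcomes of `ω` when only the coordinate `i ∈ B₊`, the set
`∅ ≠ s ⊆ B′`, or the tree edge `E` is flipped. Positive monotonicity in `u` turns
`z_{uv} = 1` into `x_v = 1`, so the edges with `z_E = 1` form a subforest of `𝔗` on the vertices
with `x_i = 1`; such a forest has fewer edges than vertices unless it is empty. Hence the
inequality forces `D_b(ω) = 1` and all `x`, `y`, `z` to vanish. Monotonicity then lets every
assignment `c` with `D_c(ω) = 1` be pushed back towards `b` coordinate by coordinate in `B₊`,
landing on a single flip in `B₊` or a nonempty flip inside `B′` unless `c = b`. So `b` is the only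
assignment with outcome `1` for `ω`, and the only sufficient cause for `ω` is the full
conjunction `B`.
-/

open Relation

open SimpleGraph in
theorem Finset.card_le_card_add_one_of_reflTransGen {α : Type*} {V : Finset α}
    {E : Finset (Sym2 α)} (hE : ∀ e ∈ E, ∀ a ∈ e, a ∈ V)
    (hconn : ∀ x ∈ V, ∀ y ∈ V, ReflTransGen (fun a b => s(a, b) ∈ E) x y) :
    V.card ≤ E.card + 1 := by
  rcases V.eq_empty_or_nonempty with rfl | ⟨v, hv⟩
  · simp
  let G : SimpleGraph V := fromEdgeSet {e | e.map Subtype.val ∈ E}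
  have hreach (x : V) {y : α} (hy : y ∈ V) (h : ReflTransGen (fun a b => s(a, b) ∈ E) x y) :
      G.Reachable x ⟨y, hy⟩ := by
    induction h with
    | refl => rfl
    | @tail m y _ hmy ih =>
      have hm : m ∈ V := hE _ hmy m (Sym2.mem_mk_left m y)
      by_cases hne : m = y
      · subst hne; exact ih hm
      · exact (ih hm).trans (Adj.reachable (by simp [G, hmy, hne]))
  have hG : G.Connected :=
    have : Nonempty V := ⟨⟨v, hv⟩⟩
    ⟨fun x y => hreach x y.2 (hconn x x.2 y y.2)⟩
  have hcard : Nat.card G.edgeSet ≤ E.card := by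
    rw [← Nat.card_eq_finsetCard]
    refine Nat.card_le_card_of_injective (fun e => ⟨e.1.map Subtype.val, ?_⟩) ?_
    · exact ((edgeSet_fromEdgeSet _).subset e.2).1
    · intro e e' h
      exact Subtype.ext (Sym2.map.injective Subtype.val_injective (congrArg Subtype.val h))
  have := hG.card_vert_le_card_edgeSet_add_one
  rw [Nat.card_eq_finsetCard] at this
  omega

theorem IsTreeOn.card_lt_card {α : Type*} [DecidableEq α] {V : Finset α} {T : Finset (Sym2 α)}
    (hT : IsTreeOn V T) {S : Finset α} (hSV : S ⊆ V) (hS : S.Nonempty) {F : Finset (Sym2 α)}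
    (hFT : F ⊆ T) (hFS : ∀ e ∈ F, ∀ a ∈ e, a ∈ S) : F.card < S.card := by
  obtain ⟨hTV, hTcard, hTconn⟩ := hT
  obtain ⟨s₀, hs₀⟩ := hS
  -- Replacing the edges of `F` by a star centred at `s₀` keeps `V` connected.
  set E := (T \ F) ∪ (S.erase s₀).image (fun s => s(s₀, s))
  have hEV : ∀ e ∈ E, ∀ a ∈ e, a ∈ V := by
    intro e he a ha
    rcases Finset.mem_union.mp he with he | he
    · exact (hTV e (Finset.mem_sdiff.mp he).1).2 a ha
    · obtain ⟨s, hs, rfl⟩ := Finset.mem_image.mp he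
      rcases Sym2.mem_iff.mp ha with rfl | rfl
      exacts [hSV hs₀, hSV (Finset.mem_of_mem_erase hs)]
  have hstar : ∀ a ∈ S, ReflTransGen (fun a b => s(a, b) ∈ E) a s₀ ∧
      ReflTransGen (fun a b => s(a, b) ∈ E) s₀ a := by
    intro a ha
    by_cases has : a = s₀
    · subst has; exact ⟨.refl, .refl⟩
    have hmem : s(s₀, a) ∈ E :=
      Finset.mem_union_right _ (Finset.mem_image_of_mem _ (Finset.mem_erase.mpr ⟨has, ha⟩))
    exact ⟨.single (Sym2.eq_swap ▸ hmem), .single hmem⟩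
  have hstep : ∀ a b, s(a, b) ∈ T → ReflTransGen (fun a b => s(a, b) ∈ E) a b := by
    intro a b hab
    by_cases habF : s(a, b) ∈ F
    · exact (hstar a (hFS _ habF a (Sym2.mem_mk_left a b))).1.trans
        (hstar b (hFS _ habF b (Sym2.mem_mk_right a b))).2
    · exact .single (Finset.mem_union_left _ (Finset.mem_sdiff.mpr ⟨hab, habF⟩))
  have hEconn : ∀ x ∈ V, ∀ y ∈ V, ReflTransGen (fun a b => s(a, b) ∈ E) x y :=
    fun x hx y hy => reflTransGen_closed hstep x y (hTconn x hx y hy)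
  have hVE := Finset.card_le_card_add_one_of_reflTransGen hEV hEconn
  have hEcard : E.card ≤ T.card - F.card + (S.card - 1) := by
    calc E.card ≤ (T \ F).card + ((S.erase s₀).image (fun s => s(s₀, s))).card :=
          Finset.card_union_le _ _
      _ ≤ T.card - F.card + (S.card - 1) := by
          rw [Finset.card_sdiff_of_subset hFT, ← Finset.card_erase_of_mem hs₀]
          exact Nat.add_le_add_left Finset.card_image_le _
  have := Finset.card_le_card hSV
  have := Finset.card_le_card hFT
  have := Finset.card_pos.mpr ⟨s₀, hs₀⟩
  omega

theorem Finset.sum_toNat_eq_card_filter {κ : Type*} (s : Finset κ) (g : κ → Bool) :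
    ∑ k ∈ s, ((g k).toNat : ℤ) = (s.filter (g · = true)).card := by
  rw [Finset.natCast_card_filter]
  exact Finset.sum_congr rfl fun k _ => by cases g k <;> rfl

section PotentialOutcomes

variable {ι Ω : Type*} {D : Ω → Assign ι → Bool} {ω : Ω}

def flipOn (b : ι → Bool) (p : ι → Prop) [DecidablePred p] : ι → Bool :=
  fun j => if p j then !(b j) else b j

variable [DecidableEq ι]

theorem PosMonotone.apply_update_eq_true {i : ι} {v : Bool} (h : PosMonotone D i v)
    {c : Assign ι} (hc : D ω c = true) : D ω (Function.update c i v) = true := by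
  by_cases hci : c i = v
  · rwa [Function.update_eq_self_iff.mpr hci.symm]
  · refine h ω c ?_
    rwa [← Bool.eq_not_iff.mpr hci, Function.update_eq_self]

theorem apply_piecewise_eq_true {b : ι → Bool} {F : Finset ι}
    (hmono : ∀ i ∈ F, PosMonotone D i (b i)) {c : Assign ι} (hc : D ω c = true) :
    D ω (F.piecewise b c) = true := by
  induction F using Finset.induction_on with
  | empty => simpa using hc
  | insert i F _ ih =>
    rw [Finset.piecewise_insert]
    exact (hmono i (F.mem_insert_self i)).apply_update_eq_true
      (ih fun j hj => hmono j (Finset.mem_insert_of_mem hj))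

theorem apply_flipOn_eq_true_of_apply_flipOn_pair_eq_true {b : ι → Bool} {u v : ι}
    (huv : u ≠ v) (hu : PosMonotone D u (b u))
    (h : D ω (flipOn b (· ∈ s(u, v))) = true) : D ω (flipOn b (· = v)) = true := by
  have hupdate : Function.update (flipOn b (· ∈ s(u, v))) u (b u) = flipOn b (· = v) := by
    funext j
    by_cases hju : j = u
    · subst hju; simp [flipOn, huv]
    · simp [flipOn, hju]
  exact hupdate ▸ hu.apply_update_eq_true h

def treeContrast (D : Ω → Assign ι → Bool) (ω : Ω) (b : ι → Bool) (Bp Bq : Finset ι)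
    (T : Finset (Sym2 ι)) : ℤ :=
  ((D ω b).toNat : ℤ) - ∑ i ∈ Bp, ((D ω (flipOn b (· = i))).toNat : ℤ)
    - ∑ s ∈ Bq.powerset.filter (fun s => s.Nonempty), ((D ω (flipOn b (· ∈ s))).toNat : ℤ)
    + ∑ E ∈ T, ((D ω (flipOn b (· ∈ E))).toNat : ℤ)

theorem apply_eq_true_and_flipOn_eq_false_of_treeContrast_pos {b : ι → Bool} {Bp Bq : Finset ι}
    {T : Finset (Sym2 ι)} (hmono : ∀ i ∈ Bp, PosMonotone D i (b i)) (hT : IsTreeOn Bp T)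
    (hpos : 0 < treeContrast D ω b Bp Bq T) :
    D ω b = true ∧ (∀ i ∈ Bp, D ω (flipOn b (· = i)) = false) ∧
      ∀ s ⊆ Bq, s.Nonempty → D ω (flipOn b (· ∈ s)) = false := by
  set S := Bp.filter fun i => D ω (flipOn b (· = i)) = true
  set Y := (Bq.powerset.filter fun s => s.Nonempty).filter
    fun s => D ω (flipOn b (· ∈ s)) = true
  set F := T.filter fun E => D ω (flipOn b (· ∈ E)) = true
  replace hpos : 0 < ((D ω b).toNat : ℤ) - S.card - Y.card + F.card := by
    simpa only [treeContrast, Finset.sum_toNat_eq_card_filter] using hpos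
  have hb : ((D ω b).toNat : ℤ) ≤ 1 := by exact_mod_cast Bool.toNat_le _
  have hFS : ∀ E ∈ F, ∀ i ∈ E, i ∈ S := by
    intro E hE
    induction E using Sym2.ind with
    | _ u v =>
      obtain ⟨hET, hED⟩ := Finset.mem_filter.mp hE
      obtain ⟨hdiag, hBp⟩ := hT.1 _ hET
      have huv : u ≠ v := fun h => hdiag (Sym2.mk_isDiag_iff.mpr h)
      have hend : ∀ {x y}, x ≠ y → s(x, y) = s(u, v) → y ∈ S := fun hxy hxy' =>
        Finset.mem_filter.mpr ⟨hBp _ (hxy' ▸ Sym2.mem_mk_right _ _),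
          apply_flipOn_eq_true_of_apply_flipOn_pair_eq_true hxy
            (hmono _ (hBp _ (hxy' ▸ Sym2.mem_mk_left _ _))) (hxy' ▸ hED)⟩
      intro i hi
      rcases Sym2.mem_iff.mp hi with rfl | rfl
      · exact hend huv.symm Sym2.eq_swap
      · exact hend huv rfl
  have hS : S = ∅ := by
    by_contra hS
    have : F.card < S.card := hT.card_lt_card (Finset.filter_subset _ _)
      (Finset.nonempty_iff_ne_empty.mpr hS) (Finset.filter_subset _ _) hFS
    omega
  have hF : F = ∅ := Finset.eq_empty_of_forall_notMem fun E hE => by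
    induction E using Sym2.ind with
    | _ u v => simpa [hS] using hFS _ hE u (Sym2.mem_mk_left u v)
  simp only [hS, hF, Finset.card_empty, CharP.cast_eq_zero] at hpos
  have hY : Y = ∅ := Finset.card_eq_zero.mp (by omega)
  refine ⟨?_, fun i hi => ?_, fun s hs hne => ?_⟩
  · exact Bool.toNat_eq_one.mp (by omega)
  · simpa using Finset.filter_eq_empty_iff.mp hS hi
  · simpa using Finset.filter_eq_empty_iff.mp hY
      (Finset.mem_filter.mpr ⟨Finset.mem_powerset.mpr hs, hne⟩)

theorem eq_of_apply_eq_true_of_flipOn_eq_false [Fintype ι] {b : ι → Bool} {Bp Bq : Finset ι}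
    (hunion : Bp ∪ Bq = Finset.univ) (hmono : ∀ i ∈ Bp, PosMonotone D i (b i))
    (hsingle : ∀ i ∈ Bp, D ω (flipOn b (· = i)) = false)
    (hsubset : ∀ s ⊆ Bq, s.Nonempty → D ω (flipOn b (· ∈ s)) = false)
    {c : Assign ι} (hc : D ω c = true) : c = b := by
  have hmem : ∀ j, j ∉ Bp → j ∈ Bq := fun j hj =>
    ((Finset.mem_union.mp (hunion ▸ Finset.mem_univ j)).resolve_left hj)
  have hBq : ∀ j ∈ Bq, c j = b j := by
    by_contra! h
    obtain ⟨j, hj, hcj⟩ := h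
    set s := Bq.filter fun j => c j ≠ b j
    have hflip : (Bp \ Bq).piecewise b c = flipOn b (· ∈ s) := by
      funext k
      by_cases hk : k ∈ Bq
      · by_cases hck : c k = b k <;> simp_all [Finset.piecewise, flipOn, s, Bool.eq_not_iff]
      · have hk' : k ∈ Bp := by_contra fun h => hk (hmem k h)
        simp [Finset.piecewise, flipOn, s, hk, hk']
    have := apply_piecewise_eq_true (F := Bp \ Bq)
      (fun i hi => hmono i (Finset.mem_sdiff.mp hi).1) hc
    rw [hflip, hsubset s (Finset.filter_subset _ _)
      ⟨j, Finset.mem_filter.mpr ⟨hj, hcj⟩⟩] at this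
    exact Bool.false_ne_true this
  funext j
  by_contra hcj
  have hj : j ∈ Bp := by_contra fun hj => hcj (hBq j (hmem j hj))
  have hflip : (Bp.erase j).piecewise b c = flipOn b (· = j) := by
    funext k
    by_cases hkj : k = j
    · subst hkj; simp [Finset.piecewise, flipOn, Bool.eq_not_iff, hcj]
    · by_cases hk : k ∈ Bp
      · simp [Finset.piecewise, flipOn, hkj, hk]
      · simp [Finset.piecewise, flipOn, hkj, hk, hBq k (hmem k hk)]
  have := apply_piecewise_eq_true (F := Bp.erase j)
    (fun i hi => hmono i (Finset.mem_of_mem_erase hi)) hc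
  rw [hflip, hsingle j hj] at this
  exact Bool.false_ne_true this

theorem singularFor_of_apply_eq_true_iff {b : Assign ι} (h : ∀ c, D ω c = true ↔ c = b) :
    SingularFor D (fun i => some (b i)) ω := by
  have hsuff : ∀ B', SuffCauseFor D B' ω → B' = fun i => some (b i) := by
    intro B' hB'
    have hfill : (fun j => (B' j).getD (b j)) = b :=
      (h _).mp (hB' _ fun j v hj => by simp [hj])
    funext i
    cases hi : B' i with
    | some v => simpa [hi] using congrFun hfill i
    | none =>
      have hflip : Function.update b i (!b i) = b := (h _).mp <| hB' _ fun j v hj => by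
        have hji : j ≠ i := by rintro rfl; simp [hi] at hj
        simpa [hji, hj] using (congrFun hfill j).symm
      simpa using congrFun hflip i
  exact ⟨⟨fun c hc => (h c).mpr (funext fun i => hc i (b i) rfl),
    fun B' _ hne hB' => hne (hsuff B' hB')⟩, fun B' hne hB' => hne (hsuff B' hB'.1)⟩

end PotentialOutcomes

theorem singular_of_monotone_condition_general {ι Ω : Type*} [Fintype ι] [DecidableEq ι]
    (D : Ω → Assign ι → Bool) (Bp Bq : Finset ι)
    (hunion : Bp ∪ Bq = Finset.univ)
    (b : ι → Bool)
    (hmono : ∀ i ∈ Bp, PosMonotone D i (b i))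
    (T : Finset (Sym2 ι)) (hT : IsTreeOn Bp T)
    (ω : Ω)
    (hineq : 0 <
      ((D ω b).toNat : ℤ)
      - ∑ i ∈ Bp,
          ((D ω (fun j => if j = i then !(b j) else b j)).toNat : ℤ)
      - ∑ s ∈ Bq.powerset.filter (fun s => s.Nonempty),
          ((D ω (fun j => if j ∈ s then !(b j) else b j)).toNat : ℤ)
      + ∑ E ∈ T,
          ((D ω (fun j => if j ∈ E then !(b j) else b j)).toNat : ℤ)) :
    Singular D (fun i => some (b i)) := by
  obtain ⟨hb, hsingle, hsubset⟩ :=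
    apply_eq_true_and_flipOn_eq_false_of_treeContrast_pos (Bq := Bq) hmono hT hineq
  refine ⟨ω, singularFor_of_apply_eq_true_iff fun c => ⟨fun hc => ?_, fun hc => hc ▸ hb⟩⟩
  exact eq_of_apply_eq_true_of_flipOn_eq_false hunion hmono hsingle hsubset hc

/-- Theorem 5.3: potential-outcome condition under positive
monotonicity of the literals in `B₊` sufficient for singularity of a
full-domain conjunction. -/
theorem singular_of_monotone_condition {ι Ω : Type*} [Fintype ι] [DecidableEq ι]
    [Nonempty ι] [Nonempty Ω]
    (D : Ω → Assign ι → Bool) (Bp Bq : Finset ι)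
    (hdisj : Disjoint Bp Bq) (hunion : Bp ∪ Bq = Finset.univ)
    (b : ι → Bool)
    (hmono : ∀ i ∈ Bp, PosMonotone D i (b i))
    (T : Finset (Sym2 ι)) (hT : IsTreeOn Bp T)
    (ω : Ω)
    (hineq : 0 <
      ((D ω b).toNat : ℤ)
      - ∑ i ∈ Bp,
          ((D ω (fun j => if j = i then !(b j) else b j)).toNat : ℤ)
      - ∑ s ∈ Bq.powerset.filter (fun s => s.Nonempty),
          ((D ω (fun j => if j ∈ s then !(b j) else b j)).toNat : ℤ)
      + ∑ E ∈ T,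
          ((D ω (fun j => if j ∈ E then !(b j) else b j)).toNat : ℤ)) :
    Singular D (fun i => some (b i)) :=
  singular_of_monotone_condition_general D Bp Bq hunion b hmono T hT ω hineq
end
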